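/- Let F be a linearly ordered field. A square matrix A ∈ Mₙ(F) is bibounded (A ~ Iₙ, i.e., ∃ r ∈ ℕ with AᵀA ≤ r·Iₙ and Iₙ ≤ r·AᵀA in the Loewner order) if and only if A is invertible and all entries of both A and A⁻¹ are bounded by natural numbers in absolute value. -/

import Mathlib

/-!
The two Loewner inequalities say `‖A v‖² ≤ r ‖v‖²` and `‖v‖² ≤ r ‖A v‖²` for all `v`. The second
forces `A` to be injective, hence invertible, and then reads `‖A⁻¹ w‖² ≤ r ‖w‖²`. So it suffices to
see that a matrix `M` satisfies `‖M v‖² ≤ r ‖v‖²` for some `r ∈ ℕ` iff its entries are bounded: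
testing on basis vectors gives `M i j ^ 2 ≤ r`, and conversely Cauchy–Schwarz row by row gives
`‖M v‖² ≤ (∑ i j, M i j ^ 2) ‖v‖²`.
-/

open Matrix

def PSD {F : Type*} [Field F] [LinearOrder F] [IsStrictOrderedRing F] {n : ℕ} (M : Matrix (Fin n) (Fin n) F) : Prop :=
  ∀ v : Fin n → F, 0 ≤ v ⬝ᵥ M.mulVec v

lemma dotProduct_transpose_mul_self_mulVec {R m n : Type*} [CommSemiring R] [Fintype m]
    [Fintype n] (A : Matrix m n R) (v : n → R) : v ⬝ᵥ (Aᵀ * A) *ᵥ v = A *ᵥ v ⬝ᵥ A *ᵥ v := by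
  rw [← mulVec_mulVec, dotProduct_mulVec, vecMul_transpose]

lemma forall_dotProduct_le_iff_nonsing_inv {R m : Type*} [CommRing R] [LE R] [Fintype m]
    [DecidableEq m] {A : Matrix m m R} (hA : IsUnit A) (c : R) :
    (∀ v, v ⬝ᵥ v ≤ c * (A *ᵥ v ⬝ᵥ A *ᵥ v)) ↔ ∀ w, A⁻¹ *ᵥ w ⬝ᵥ A⁻¹ *ᵥ w ≤ c * (w ⬝ᵥ w) := by
  have hdet := (isUnit_iff_isUnit_det A).mp hA
  refine ⟨fun h w => ?_, fun h v => ?_⟩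
  · simpa only [mulVec_mulVec, mul_nonsing_inv A hdet, one_mulVec] using h (A⁻¹ *ᵥ w)
  · simpa only [mulVec_mulVec, nonsing_inv_mul A hdet, one_mulVec] using h (A *ᵥ v)

section OrderedRing

variable {R m n : Type*} [CommRing R] [LinearOrder R] [IsStrictOrderedRing R]
  [Fintype m] [Fintype n]

lemma dotProduct_self_nonneg (v : n → R) : 0 ≤ v ⬝ᵥ v :=
  Finset.sum_nonneg fun i _ => mul_self_nonneg (v i)

lemma abs_le_add_one_of_sq_le {a c : R} (h : a ^ 2 ≤ c) : |a| ≤ c + 1 := by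
  nlinarith [sq_abs a, sq_nonneg (|a| - 1)]

lemma sq_le_of_forall_dotProduct_mulVec_le [DecidableEq n] {A : Matrix m n R} {c : R}
    (h : ∀ v, A *ᵥ v ⬝ᵥ A *ᵥ v ≤ c * (v ⬝ᵥ v)) (i : m) (j : n) : A i j ^ 2 ≤ c := by
  have hj := h (Pi.single j 1)
  rw [mulVec_single_one, dotProduct_single, Pi.single_eq_same, mul_one, mul_one] at hj
  calc A i j ^ 2 = A i j * A i j := sq _
    _ ≤ A.col j ⬝ᵥ A.col j :=
      Finset.single_le_sum (f := fun l => A l j * A l j) (fun l _ => mul_self_nonneg _)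
        (Finset.mem_univ i)
    _ ≤ c := hj

lemma dotProduct_mulVec_le_sum_sq_mul (A : Matrix m n R) (v : n → R) :
    A *ᵥ v ⬝ᵥ A *ᵥ v ≤ (∑ i, ∑ j, A i j ^ 2) * (v ⬝ᵥ v) := by
  have hv : v ⬝ᵥ v = ∑ j, v j ^ 2 := by simp only [dotProduct, sq]
  rw [Finset.sum_mul]
  refine Finset.sum_le_sum fun i _ => ?_
  rw [← sq, hv]
  exact Finset.sum_mul_sq_le_sq_mul_sq _ _ _

lemma exists_nat_forall_dotProduct_mulVec_le_iff [DecidableEq n] {A : Matrix m n R} :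
    (∃ r : ℕ, ∀ v, A *ᵥ v ⬝ᵥ A *ᵥ v ≤ r * (v ⬝ᵥ v)) ↔ ∀ i j, ∃ r : ℕ, |A i j| ≤ r := by
  constructor
  · rintro ⟨r, h⟩ i j
    exact ⟨r + 1, by
      exact_mod_cast abs_le_add_one_of_sq_le (sq_le_of_forall_dotProduct_mulVec_le h i j)⟩
  · intro h
    choose b hb using h
    refine ⟨∑ i, ∑ j, b i j ^ 2, fun v => (dotProduct_mulVec_le_sum_sq_mul A v).trans ?_⟩
    refine mul_le_mul_of_nonneg_right ?_ (dotProduct_self_nonneg v)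
    push_cast
    exact Finset.sum_le_sum fun i _ => Finset.sum_le_sum fun j _ =>
      sq_le_sq.mpr ((hb i j).trans (le_abs_self _))

end OrderedRing

section OrderedField

variable {F : Type*} [Field F] [LinearOrder F] [IsStrictOrderedRing F]

lemma isUnit_of_forall_dotProduct_le {m : Type*} [Fintype m] [DecidableEq m]
    {A : Matrix m m F} {c : F} (h : ∀ v, v ⬝ᵥ v ≤ c * (A *ᵥ v ⬝ᵥ A *ᵥ v)) : IsUnit A := by
  rw [← mulVec_injective_iff_isUnit]
  intro v w hvw
  have hker := h (v - w)
  rw [mulVec_sub, hvw, sub_self, zero_dotProduct, mul_zero] at hker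
  exact sub_eq_zero.mp (dotProduct_self_eq_zero.mp (le_antisymm hker (dotProduct_self_nonneg _)))

variable {n : ℕ}

lemma psd_smul_one_sub_transpose_mul_self_iff (c : F) (A : Matrix (Fin n) (Fin n) F) :
    PSD (c • (1 : Matrix (Fin n) (Fin n) F) - Aᵀ * A) ↔
      ∀ v, A *ᵥ v ⬝ᵥ A *ᵥ v ≤ c * (v ⬝ᵥ v) := by
  simp only [PSD, sub_mulVec, smul_mulVec, one_mulVec, dotProduct_sub, dotProduct_smul,
    smul_eq_mul, dotProduct_transpose_mul_self_mulVec, sub_nonneg]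

lemma psd_smul_transpose_mul_self_sub_one_iff (c : F) (A : Matrix (Fin n) (Fin n) F) :
    PSD (c • (Aᵀ * A) - 1) ↔ ∀ v, v ⬝ᵥ v ≤ c * (A *ᵥ v ⬝ᵥ A *ᵥ v) := by
  simp only [PSD, sub_mulVec, smul_mulVec, one_mulVec, dotProduct_sub, dotProduct_smul,
    smul_eq_mul, dotProduct_transpose_mul_self_mulVec, sub_nonneg]

end OrderedField

theorem stmt_12 (F : Type*) [Field F] [LinearOrder F] [IsStrictOrderedRing F] (n : ℕ)
    (A : Matrix (Fin n) (Fin n) F) :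
    (∃ r : ℕ, PSD ((r : F) • (1 : Matrix (Fin n) (Fin n) F) - Aᵀ * A) ∧
        PSD ((r : F) • (Aᵀ * A) - (1 : Matrix (Fin n) (Fin n) F))) ↔
      (IsUnit A ∧ (∀ i j, ∃ r : ℕ, |A i j| ≤ (r : F)) ∧
        (∀ i j, ∃ r : ℕ, |A⁻¹ i j| ≤ (r : F))) := by
  simp only [psd_smul_one_sub_transpose_mul_self_iff, psd_smul_transpose_mul_self_sub_one_iff]
  constructor
  · rintro ⟨r, hupper, hlower⟩
    have hA := isUnit_of_forall_dotProduct_le hlower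
    rw [forall_dotProduct_le_iff_nonsing_inv hA] at hlower
    exact ⟨hA, exists_nat_forall_dotProduct_mulVec_le_iff.mp ⟨r, hupper⟩,
      exists_nat_forall_dotProduct_mulVec_le_iff.mp ⟨r, hlower⟩⟩
  · rintro ⟨hA, hbdd, hbdd_inv⟩
    obtain ⟨r, hupper⟩ := exists_nat_forall_dotProduct_mulVec_le_iff.mpr hbdd
    obtain ⟨s, hlower⟩ := exists_nat_forall_dotProduct_mulVec_le_iff.mpr hbdd_inv
    have hr : (r : F) ≤ (max r s : ℕ) := by exact_mod_cast le_max_left r s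
    have hs : (s : F) ≤ (max r s : ℕ) := by exact_mod_cast le_max_right r s
    refine ⟨max r s, fun v => (hupper v).trans ?_,
      (forall_dotProduct_le_iff_nonsing_inv hA _).mpr fun w => (hlower w).trans ?_⟩
    · exact mul_le_mul_of_nonneg_right hr (dotProduct_self_nonneg v)
    · exact mul_le_mul_of_nonneg_right hs (dotProduct_self_nonneg w)
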